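/- Let n and d be positive integers with n ≥ d > 2. Then n·P(n−1, d−2) ≥ 2·P(n,d). -/

import Mathlib

open Finset

/-- Hamming distance between two permutations of `{0,…,n-1}`. -/
def permDist {n : ℕ} (x y : Equiv.Perm (Fin n)) : ℕ :=
  (Finset.univ.filter fun i => x i ≠ y i).card

/-- Weight of a permutation: number of non-fixed points. -/
def permWt {n : ℕ} (x : Equiv.Perm (Fin n)) : ℕ :=
  (Finset.univ.filter fun i => x i ≠ i).card

/-- `C` is an `(n,d)` permutation array. -/
def IsPA (n d : ℕ) (C : Finset (Equiv.Perm (Fin n))) : Prop :=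
  ∀ x ∈ C, ∀ y ∈ C, x ≠ y → d ≤ permDist x y

/-- `P(n,d)`: the maximum size of an `(n,d)` permutation array. -/
noncomputable def Pmax (n d : ℕ) : ℕ :=
  sSup {m | ∃ C : Finset (Equiv.Perm (Fin n)), IsPA n d C ∧ C.card = m}

/-- `P[n,e]`: the maximum size of a subset of `S_n` with pairwise distances at most `e`. -/
noncomputable def PmaxLe (n e : ℕ) : ℕ :=
  sSup {m | ∃ Γ : Finset (Equiv.Perm (Fin n)),
    (∀ x ∈ Γ, ∀ y ∈ Γ, x ≠ y → permDist x y ≤ e) ∧ Γ.card = m}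

/-- `V(n,r) = Σ_{i=0}^{r} C(n,i)·D_i`. -/
def V (n r : ℕ) : ℕ := ∑ i ∈ Finset.range (r + 1), Nat.choose n i * numDerangements i

/-- `V₂(n,r) = Σ_{i=0}^{r} C(n,i)`. -/
def V2 (n r : ℕ) : ℕ := ∑ i ∈ Finset.range (r + 1), Nat.choose n i

/-- `L_{i,j}` (depending also on `n` and `d`). -/
def L (n d i j : ℕ) : ℕ :=
  ∑ k ∈ Finset.Icc ((i + j + 1 - d + 1) / 2) (min i j),
    ∑ l ∈ Finset.range (min (d + 2 * k - i - j - 1) k + 1),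
      Nat.choose i k * Nat.choose (n - i) (j - k) * Nat.choose k l *
        Nat.factorial (l + j - k)

/-- `T`: number of unordered pairs of distinct permutations in `S_n`, each of weight
between `1` and `d-1`, with Hamming distance at most `d-1`. -/
def Tperm (n d : ℕ) : ℕ :=
  ((Finset.univ : Finset (Equiv.Perm (Fin n) × Equiv.Perm (Fin n))).filter
    (fun p => p.1 ≠ p.2 ∧ 1 ≤ permWt p.1 ∧ permWt p.1 ≤ d - 1 ∧
      1 ≤ permWt p.2 ∧ permWt p.2 ≤ d - 1 ∧ permDist p.1 p.2 ≤ d - 1)).card / 2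

/-- Hamming weight of a binary vector. -/
def binWt {n : ℕ} (u : Fin n → Bool) : ℕ := (Finset.univ.filter fun i => u i ≠ false).card

/-- Hamming distance between binary vectors. -/
def binDist {n : ℕ} (u v : Fin n → Bool) : ℕ := (Finset.univ.filter fun i => u i ≠ v i).card

/-- `T′`: number of unordered pairs of distinct nonzero binary vectors of length `n`,
each of Hamming weight at most `d-1`, with Hamming distance at most `d-1`. -/
def Tbin (n d : ℕ) : ℕ :=
  ((Finset.univ : Finset ((Fin n → Bool) × (Fin n → Bool))).filter
    (fun p => p.1 ≠ p.2 ∧ p.1 ≠ (fun _ => false) ∧ p.2 ≠ (fun _ => false) ∧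
      binWt p.1 ≤ d - 1 ∧ binWt p.2 ≤ d - 1 ∧ binDist p.1 p.2 ≤ d - 1)).card / 2

/-!
Fix an optimal `(n, d)` PA `C` and split it into the fibres `C_a = {x ∈ C | x 0 = a}`. For
`a ≠ b`, composing the permutations of `C_b` with the transposition `(a b)` moves them into the
fibre over `a` while lowering distances by at most `2`; deleting the common value at `0` then
turns `C_a ∪ C_b` into an `(n - 1, d - 2)` PA of the same size, the map being injective because
`d > 2`. Hence `|C_a| + |C_b| ≤ P(n - 1, d - 2)`, and summing over the `n (n - 1)` ordered pairs
`a ≠ b` gives `2 (n - 1) |C| ≤ n (n - 1) P(n - 1, d - 2)`.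
-/

section PermDist

variable {n : ℕ}

lemma permDist_eq_hammingDist (x y : Equiv.Perm (Fin n)) : permDist x y = hammingDist ⇑x ⇑y :=
  rfl

lemma permDist_comm (x y : Equiv.Perm (Fin n)) : permDist x y = permDist y x := by
  simp only [permDist_eq_hammingDist, hammingDist_comm]

lemma permDist_triangle (x y z : Equiv.Perm (Fin n)) :
    permDist x z ≤ permDist x y + permDist y z := by
  simpa only [permDist_eq_hammingDist] using hammingDist_triangle ⇑x ⇑y ⇑z

lemma permDist_self (x : Equiv.Perm (Fin n)) : permDist x x = 0 :=
  hammingDist_self ⇑x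

lemma permDist_mul_left (ρ x y : Equiv.Perm (Fin n)) :
    permDist (ρ * x) (ρ * y) = permDist x y :=
  hammingDist_comp (fun _ => ρ) fun _ => ρ.injective

lemma permDist_swap_mul_self_le (a b : Fin n) (y : Equiv.Perm (Fin n)) :
    permDist (Equiv.swap a b * y) y ≤ 2 := by
  refine (card_le_card fun i hi => ?_).trans (card_le_two (a := y.symm a) (b := y.symm b))
  rw [Finset.mem_filter_univ, Equiv.Perm.mul_apply] at hi
  have : y i = a ∨ y i = b := by
    by_contra! h
    exact hi (Equiv.swap_apply_of_ne_of_ne h.1 h.2)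
  rcases this with h | h <;> simp [← h]

lemma permDist_decomposeFin_snd {m : ℕ} {σ τ : Equiv.Perm (Fin (m + 1))} (h : σ 0 = τ 0) :
    permDist (Equiv.Perm.decomposeFin σ).2 (Equiv.Perm.decomposeFin τ).2 = permDist σ τ := by
  obtain ⟨⟨p, σ'⟩, rfl⟩ := Equiv.Perm.decomposeFin.symm.surjective σ
  obtain ⟨⟨q, τ'⟩, rfl⟩ := Equiv.Perm.decomposeFin.symm.surjective τ
  simp only [Equiv.Perm.decomposeFin_symm_apply_zero] at h
  subst h
  simp only [Equiv.apply_symm_apply, permDist]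
  rw [Fin.card_filter_univ_succ]
  simp

end PermDist

lemma IsPA.subset {n d : ℕ} {C D : Finset (Equiv.Perm (Fin n))} (hC : IsPA n d C) (hDC : D ⊆ C) :
    IsPA n d D :=
  fun x hx y hy => hC x (hDC hx) y (hDC hy)

lemma bddAbove_card_isPA (n d : ℕ) :
    BddAbove {m | ∃ C : Finset (Equiv.Perm (Fin n)), IsPA n d C ∧ C.card = m} :=
  ⟨Fintype.card (Equiv.Perm (Fin n)), by rintro m ⟨C, -, rfl⟩; exact C.card_le_univ⟩

lemma IsPA.card_le_Pmax {n d : ℕ} {C : Finset (Equiv.Perm (Fin n))} (hC : IsPA n d C) :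
    C.card ≤ Pmax n d :=
  le_csSup (bddAbove_card_isPA n d) ⟨C, hC, rfl⟩

lemma exists_isPA_card_eq_Pmax (n d : ℕ) :
    ∃ C : Finset (Equiv.Perm (Fin n)), IsPA n d C ∧ C.card = Pmax n d := by
  have hne : {m | ∃ C : Finset (Equiv.Perm (Fin n)), IsPA n d C ∧ C.card = m}.Nonempty :=
    ⟨0, ∅, fun x hx => absurd hx (notMem_empty x), card_empty⟩
  exact Nat.sSup_mem hne (bddAbove_card_isPA n d)

lemma IsPA.card_le_Pmax_of_permDist_le {n m d e : ℕ} {C : Finset (Equiv.Perm (Fin n))}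
    (hC : IsPA n d C) (he : e < d) (f : Equiv.Perm (Fin n) → Equiv.Perm (Fin m))
    (hf : ∀ x ∈ C, ∀ y ∈ C, permDist x y ≤ permDist (f x) (f y) + e) :
    C.card ≤ Pmax m (d - e) := by
  have hfar : ∀ x ∈ C, ∀ y ∈ C, x ≠ y → d - e ≤ permDist (f x) (f y) := fun x hx y hy hxy =>
    by have := hC x hx y hy hxy; have := hf x hx y hy; omega
  have hinj : Set.InjOn f C := fun x hx y hy hxy => by
    by_contra hne
    have := hfar x hx y hy hne
    rw [hxy, permDist_self] at this
    omega
  rw [← card_image_of_injOn hinj]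
  refine IsPA.card_le_Pmax fun u hu v hv huv => ?_
  obtain ⟨x, hx, rfl⟩ := mem_image.mp hu
  obtain ⟨y, hy, rfl⟩ := mem_image.mp hv
  exact hfar x hx y hy fun h => huv (h ▸ rfl)

lemma IsPA.card_filter_apply_zero_add_le {m d : ℕ} {C : Finset (Equiv.Perm (Fin (m + 1)))}
    (hC : IsPA (m + 1) d C) (hd : 2 < d) {a b : Fin (m + 1)} (hab : a ≠ b) :
    #{x ∈ C | x 0 = a} + #{x ∈ C | x 0 = b} ≤ Pmax m (d - 2) := by
  set s : Equiv.Perm (Fin (m + 1)) → Equiv.Perm (Fin (m + 1)) :=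
    fun x => if x 0 = a then x else Equiv.swap a b * x
  have hs_zero : ∀ x ∈ C.filter (fun x => x 0 = a ∨ x 0 = b), s x 0 = a := by
    intro x hx
    rcases (mem_filter.mp hx).2 with h | h
    · simp [s, h]
    · simp [s, h, hab.symm]
  have hs_dist : ∀ x y, permDist x y ≤ permDist (s x) (s y) + 2 := by
    intro x y
    have hx : permDist x (Equiv.swap a b * x) ≤ 2 :=
      permDist_comm x _ ▸ permDist_swap_mul_self_le a b x
    have hy := permDist_swap_mul_self_le a b y
    have := permDist_triangle x (Equiv.swap a b * x) y
    have := permDist_triangle x (Equiv.swap a b * y) y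
    simp only [s]
    split_ifs
    all_goals first | omega | (rw [permDist_mul_left]; omega)
  have hsplit : #{x ∈ C | x 0 = a} + #{x ∈ C | x 0 = b}
      = #{x ∈ C | x 0 = a ∨ x 0 = b} := by
    rw [filter_or, card_union_of_disjoint
      (disjoint_filter.mpr fun x _ ha hb => hab (ha.symm.trans hb))]
  rw [hsplit]
  refine (hC.subset (filter_subset _ C)).card_le_Pmax_of_permDist_le (by omega)
    (fun x => (Equiv.Perm.decomposeFin (s x)).2) fun x hx y hy => ?_
  rw [permDist_decomposeFin_snd ((hs_zero x hx).trans (hs_zero y hy).symm)]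
  exact hs_dist x y

lemma two_mul_sum_le_card_mul_of_add_le {ι : Type*} [Fintype ι] [DecidableEq ι] {c : ι → ℕ}
    {M : ℕ} (hι : 1 < Fintype.card ι) (hc : ∀ a b, a ≠ b → c a + c b ≤ M) :
    2 * ∑ a, c a ≤ Fintype.card ι * M := by
  obtain ⟨k, hk⟩ : ∃ k, Fintype.card ι = k + 1 := ⟨Fintype.card ι - 1, by omega⟩
  have hrow : ∀ a, k * c a + ∑ b, c b ≤ k * M + c a := by
    intro a
    have hle := sum_le_sum (s := univ.erase a) fun b hb => hc a b (mem_erase.mp hb).1.symm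
    rw [sum_add_distrib, sum_const, sum_const, card_erase_of_mem (mem_univ a), card_univ, hk,
      Nat.add_sub_cancel, smul_eq_mul, smul_eq_mul] at hle
    have := add_sum_erase univ c (mem_univ a)
    omega
  have htotal := sum_le_sum fun a (_ : a ∈ univ) => hrow a
  rw [sum_add_distrib, sum_add_distrib, ← mul_sum, sum_const, sum_const, card_univ, hk,
    smul_eq_mul, smul_eq_mul] at htotal
  have : k * (2 * ∑ a, c a) ≤ k * ((k + 1) * M) := by nlinarith
  rw [hk]
  exact Nat.le_of_mul_le_mul_left this (by omega)

theorem stmt18 (n d : ℕ) (hd : 2 < d) (hdn : d ≤ n) :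
    n * Pmax (n - 1) (d - 2) ≥ 2 * Pmax n d := by
  obtain ⟨m, rfl⟩ : ∃ m, n = m + 1 := ⟨n - 1, by omega⟩
  obtain ⟨C, hC, hcard⟩ := exists_isPA_card_eq_Pmax (m + 1) d
  have hfibres : C.card = ∑ a, #{x ∈ C | x 0 = a} :=
    card_eq_sum_card_fiberwise fun x _ => mem_univ (x 0)
  have hsum := two_mul_sum_le_card_mul_of_add_le (c := fun a => #{x ∈ C | x 0 = a})
    (by rw [Fintype.card_fin]; omega) fun a b hab => hC.card_filter_apply_zero_add_le hd hab
  rw [Fintype.card_fin, ← hfibres, hcard] at hsum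
  simpa only [Nat.add_sub_cancel, ge_iff_le] using hsum
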